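/- Let T > 0, let A ∈ ℝ^{ν×ν}, Θ ∈ ℝ^{ν×ν} with Θᵀ = −Θ, and S ∈ ℝ^{n×ν}. Suppose the matrix ℧ := −(AΘ + ΘAᵀ) is invertible. Given a continuous f : [0,T] → ℂⁿ, define h₊(t) := ∫₀ᵗ exp((t−τ)A) Θ Sᵀ f(τ) dτ, h₋(t) := ∫ₜᵀ exp((τ−t)Aᵀ) Sᵀ f(τ) dτ, and z(t) := h₊(t) + Θ h₋(t). Then z is twice differentiable on [0,T] and satisfies the second-order ODE z̈(t) + (℧ Aᵀ ℧⁻¹ − A) ż(t) − ℧ Aᵀ ℧⁻¹ A z(t) = −℧ Sᵀ f(t) for all t ∈ [0,T], together with the boundary conditions (Iν + Θ ℧⁻¹ A) z(0) = Θ ℧⁻¹ ż(0) and ż(T) = A z(T). -/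

import Mathlib

/-!
Writing `h₊(t) = exp(tA) ∫₀ᵗ exp(-τA) Θ Sᵀ f(τ) dτ`, the product rule and the fundamental theorem
of calculus give `ḣ₊ = A h₊ + Θ Sᵀ f`, and likewise `ḣ₋ = -Aᵀ h₋ - Sᵀ f`. In `ż = ḣ₊ + Θ ḣ₋` the
forcing terms cancel, and the realizability condition `AΘ + ΘAᵀ = -℧` turns the rest into
`ż = A z + ℧ h₋`. Differentiating once more and eliminating `h₋ = ℧⁻¹ (ż - A z)` gives the
second-order equation; the boundary conditions come from `h₊(0) = 0` and `h₋(T) = 0`.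
-/

open MeasureTheory Matrix NormedSpace Set intervalIntegral

variable {𝕜 ι κ : Type*} [RCLike 𝕜] [Fintype ι]

theorem HasDerivAt.matrix_mulVec {M : ℝ → Matrix κ ι 𝕜} {M' : Matrix κ ι 𝕜} {v : ℝ → ι → 𝕜}
    {v' : ι → 𝕜} {t : ℝ} (hM : HasDerivAt M M' t) (hv : HasDerivAt v v' t) :
    HasDerivAt (fun t => M t *ᵥ v t) (M' *ᵥ v t + M t *ᵥ v') t := by
  refine hasDerivAt_pi.2 fun i => ?_
  simp only [mulVec, dotProduct, Pi.add_apply, ← Finset.sum_add_distrib]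
  exact HasDerivAt.fun_sum fun j _ =>
    (hasDerivAt_pi.1 (hasDerivAt_pi.1 hM i) j).mul (hasDerivAt_pi.1 hv j)

theorem HasDerivWithinAt.const_mulVec (M : Matrix κ ι 𝕜) {v : ℝ → ι → 𝕜} {v' : ι → 𝕜}
    {s : Set ℝ} {t : ℝ} (hv : HasDerivWithinAt v v' s t) :
    HasDerivWithinAt (fun t => M *ᵥ v t) (M *ᵥ v') s t := by
  refine hasDerivWithinAt_pi.2 fun i => ?_
  simp only [mulVec, dotProduct]
  exact HasDerivWithinAt.fun_sum fun j _ => (hasDerivWithinAt_pi.1 hv j).const_mul (M i j)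

theorem ContinuousOn.const_mulVec (M : Matrix κ ι 𝕜) {v : ℝ → ι → 𝕜} {s : Set ℝ}
    (hv : ContinuousOn v s) : ContinuousOn (fun t => M *ᵥ v t) s :=
  (continuous_const.matrix_mulVec continuous_id).comp_continuousOn hv

theorem ContinuousOn.exists_continuous_eqOn_Icc {α E : Type*} [LinearOrder α] [TopologicalSpace α]
    [OrderTopology α] [TopologicalSpace E] {a b : α} (hab : a ≤ b) {f : α → E}
    (hf : ContinuousOn f (Icc a b)) : ∃ F : α → E, Continuous F ∧ EqOn F f (Icc a b) :=
  ⟨IccExtend hab ((Icc a b).domRestrict f),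
    (continuousOn_iff_continuous_domRestrict.1 hf).Icc_extend',
    fun _ hx => IccExtend_of_mem hab _ hx⟩

namespace Matrix

theorem mulVec_intervalIntegral [Fintype κ] (M : Matrix κ ι 𝕜) {g : ℝ → ι → 𝕜} {a b : ℝ}
    (hg : IntervalIntegrable g volume a b) :
    M *ᵥ ∫ τ in a..b, g τ = ∫ τ in a..b, M *ᵥ g τ :=
  (((mulVecLin M).restrictScalars ℝ).toContinuousLinearMap.intervalIntegral_comp_comm hg).symm

theorem map_ofReal_mul {l m : Type*} [Fintype m] (M : Matrix l m ℝ) (N : Matrix m κ ℝ) :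
    (M * N).map Complex.ofReal = M.map Complex.ofReal * N.map Complex.ofReal :=
  Matrix.map_mul (f := Complex.ofRealHom)

variable [DecidableEq ι]

theorem map_ofReal_exp_smul (A : Matrix ι ι ℝ) (s : ℝ) :
    (exp (s • A)).map Complex.ofReal = exp (s • A.map Complex.ofReal) := by
  have hs : (s • A).map Complex.ofReal = s • A.map Complex.ofReal := by ext; simp
  rw [← hs]
  open scoped Matrix.Norms.Operator in
  exact map_exp Complex.ofRealHom.mapMatrix (continuous_id.matrix_map Complex.continuous_ofReal) _

theorem hasDerivAt_exp_smul (N : Matrix ι ι 𝕜) (t : ℝ) :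
    HasDerivAt (fun s : ℝ => exp (s • N)) (N * exp (t • N)) t := by
  open scoped Matrix.Norms.Operator in exact hasDerivAt_exp_smul_const' N t

theorem continuous_exp_smul (N : Matrix ι ι 𝕜) : Continuous fun t : ℝ => exp (t • N) := by
  open scoped Matrix.Norms.Operator in
  exact continuous_iff_continuousAt.2 fun t => (hasDerivAt_exp_smul N t).continuousAt

theorem exp_sub_smul (N : Matrix ι ι 𝕜) (s t : ℝ) :
    exp ((s - t) • N) = exp (s • N) * exp ((-t) • N) := by
  rw [sub_eq_add_neg, add_smul,
    exp_add_of_commute _ _ (((Commute.refl N).smul_left _).smul_right _)]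

theorem hasDerivAt_integral_exp_smul_mulVec (N : Matrix ι ι 𝕜) {g : ℝ → ι → 𝕜}
    (hg : Continuous g) (c t : ℝ) :
    HasDerivAt (fun t => ∫ τ in c..t, exp ((t - τ) • N) *ᵥ g τ)
      (N *ᵥ (∫ τ in c..t, exp ((t - τ) • N) *ᵥ g τ) + g t) t := by
  have hint : Continuous fun τ : ℝ => exp ((-τ) • N) *ᵥ g τ :=
    ((continuous_exp_smul N).comp continuous_neg).matrix_mulVec hg
  have hfactor (t : ℝ) : ∫ τ in c..t, exp ((t - τ) • N) *ᵥ g τ =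
      exp (t • N) *ᵥ ∫ τ in c..t, exp ((-τ) • N) *ᵥ g τ := by
    rw [mulVec_intervalIntegral _ (hint.intervalIntegrable _ _)]
    simp only [exp_sub_smul, mulVec_mulVec]
  have := (hasDerivAt_exp_smul N t).matrix_mulVec (hint.integral_hasStrictDerivAt c t).hasDerivAt
  rw [funext hfactor, hfactor]
  convert this using 1
  rw [mulVec_mulVec (M := exp (t • N)), ← exp_sub_smul, sub_self, zero_smul, exp_zero,
    one_mulVec, ← mulVec_mulVec]

theorem hasDerivWithinAt_integral_exp_smul_mulVec (N : Matrix ι ι 𝕜) {g : ℝ → ι → 𝕜}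
    {a b c t : ℝ} (hg : ContinuousOn g (Icc a b)) (hc : c ∈ Icc a b) (ht : t ∈ Icc a b) :
    HasDerivWithinAt (fun t => ∫ τ in c..t, exp ((t - τ) • N) *ᵥ g τ)
      (N *ᵥ (∫ τ in c..t, exp ((t - τ) • N) *ᵥ g τ) + g t) (Icc a b) t := by
  obtain ⟨G, hG, hGg⟩ := hg.exists_continuous_eqOn_Icc (hc.1.trans hc.2)
  have heq : ∀ s ∈ Icc a b, ∫ τ in c..s, exp ((s - τ) • N) *ᵥ g τ =
      ∫ τ in c..s, exp ((s - τ) • N) *ᵥ G τ := fun s hs =>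
    integral_congr fun τ hτ => by rw [hGg (uIcc_subset_Icc hc hs hτ)]
  refine ((hasDerivAt_integral_exp_smul_mulVec N hG c t).hasDerivWithinAt.congr heq
    (heq t ht)).congr_deriv ?_
  rw [heq t ht, hGg ht]

theorem hasDerivWithinAt_integral_exp_smul_mulVec_left (N : Matrix ι ι 𝕜) {g : ℝ → ι → 𝕜}
    {a b c t : ℝ} (hg : ContinuousOn g (Icc a b)) (hc : c ∈ Icc a b) (ht : t ∈ Icc a b) :
    HasDerivWithinAt (fun t => ∫ τ in t..c, exp ((τ - t) • N) *ᵥ g τ)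
      (-(N *ᵥ ∫ τ in t..c, exp ((τ - t) • N) *ᵥ g τ) - g t) (Icc a b) t := by
  have hflip (t : ℝ) : ∫ τ in t..c, exp ((τ - t) • N) *ᵥ g τ =
      -∫ τ in c..t, exp ((t - τ) • -N) *ᵥ g τ := by
    rw [integral_symm c t]
    simp only [smul_neg, ← neg_smul, neg_sub]
  rw [funext hflip, hflip, mulVec_neg]
  refine (hasDerivWithinAt_integral_exp_smul_mulVec (-N) hg hc ht).neg.congr_deriv ?_
  rw [neg_mulVec, neg_add, sub_eq_add_neg]

end Matrix

theorem hasDerivWithinAt_add_mulVec_of_realizable {N Nt Θ Ω : Matrix ι ι 𝕜}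
    (hΩ : Ω = -(N * Θ + Θ * Nt)) {p m : ℝ → ι → 𝕜} {u : ι → 𝕜} {s : Set ℝ} {t : ℝ}
    (hp : HasDerivWithinAt p (N *ᵥ p t + Θ *ᵥ u) s t)
    (hm : HasDerivWithinAt m (-(Nt *ᵥ m t) - u) s t) :
    HasDerivWithinAt (fun t => p t + Θ *ᵥ m t) (N *ᵥ (p t + Θ *ᵥ m t) + Ω *ᵥ m t) s t := by
  refine (hp.add (hm.const_mulVec Θ)).congr_deriv ?_
  rw [hΩ, mulVec_add, neg_mulVec, add_mulVec, ← mulVec_mulVec, ← mulVec_mulVec, mulVec_sub,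
    mulVec_neg]
  abel

section FirstOrderSystem

variable [DecidableEq ι] {R : Type*} [CommRing R] {N Nt Θ Ω W : Matrix ι ι R}

theorem second_order_eq_of_first_order (hW : W * Ω = 1) {z z' z'' m u : ι → R}
    (hz' : z' = N *ᵥ z + Ω *ᵥ m) (hz'' : z'' = N *ᵥ z' + Ω *ᵥ (-(Nt *ᵥ m) - u)) :
    z'' + (Ω * Nt * W - N) *ᵥ z' - (Ω * Nt * W * N) *ᵥ z = -(Ω *ᵥ u) := by
  have hm : Ω *ᵥ m = z' - N *ᵥ z := by rw [hz']; abel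
  have key : (Ω * Nt * W) *ᵥ z' - (Ω * Nt * W * N) *ᵥ z = (Ω * Nt) *ᵥ m := by
    rw [← mulVec_mulVec z (Ω * Nt * W) N, ← mulVec_sub, ← hm, mulVec_mulVec,
      Matrix.mul_assoc (Ω * Nt), hW, Matrix.mul_one]
  rw [hz'', sub_mulVec, mulVec_sub, mulVec_neg, mulVec_mulVec m Ω Nt, ← key]
  abel

theorem initial_condition_eq_of_first_order (hW : W * Ω = 1) {z m : ι → R} (hz : z = Θ *ᵥ m) :
    (1 + Θ * W * N) *ᵥ z = (Θ * W) *ᵥ (N *ᵥ z + Ω *ᵥ m) := by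
  rw [add_mulVec, one_mulVec, mulVec_add, mulVec_mulVec, mulVec_mulVec, Matrix.mul_assoc Θ W Ω, hW,
    Matrix.mul_one, ← hz, add_comm]

end FirstOrderSystem

theorem oqho_second_order_bvp_general {ν n : ℕ} (T : ℝ) (hT : 0 < T)
    (A Θ : Matrix (Fin ν) (Fin ν) ℝ)
    (S : Matrix (Fin n) (Fin ν) ℝ)
    (℧ : Matrix (Fin ν) (Fin ν) ℝ) (h℧ : ℧ = -(A * Θ + Θ * Aᵀ)) (h℧u : IsUnit ℧)
    (f : ℝ → Fin n → ℂ) (hf : ContinuousOn f (Set.Icc 0 T))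
    (hplus hminus z : ℝ → Fin ν → ℂ)
    (hp : ∀ t : ℝ, hplus t =
      ∫ τ in (0:ℝ)..t, ((NormedSpace.exp ((t - τ) • A) * Θ * Sᵀ).map ((↑) : ℝ → ℂ)) *ᵥ f τ)
    (hm : ∀ t : ℝ, hminus t =
      ∫ τ in t..T, ((NormedSpace.exp ((τ - t) • Aᵀ) * Sᵀ).map ((↑) : ℝ → ℂ)) *ᵥ f τ)
    (hz : ∀ t : ℝ, z t = hplus t + (Θ.map ((↑) : ℝ → ℂ)) *ᵥ hminus t) :
    ∃ z' z'' : ℝ → Fin ν → ℂ,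
      (∀ t ∈ Set.Icc (0:ℝ) T, HasDerivWithinAt z (z' t) (Set.Icc 0 T) t) ∧
      (∀ t ∈ Set.Icc (0:ℝ) T, HasDerivWithinAt z' (z'' t) (Set.Icc 0 T) t) ∧
      (∀ t ∈ Set.Icc (0:ℝ) T,
        z'' t + ((℧ * Aᵀ * ℧⁻¹ - A).map ((↑) : ℝ → ℂ)) *ᵥ z' t
            - ((℧ * Aᵀ * ℧⁻¹ * A).map ((↑) : ℝ → ℂ)) *ᵥ z t
          = -(((℧ * Sᵀ).map ((↑) : ℝ → ℂ)) *ᵥ f t)) ∧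
      ((1 + Θ * ℧⁻¹ * A).map ((↑) : ℝ → ℂ)) *ᵥ z 0
          = ((Θ * ℧⁻¹).map ((↑) : ℝ → ℂ)) *ᵥ z' 0 ∧
      z' T = (A.map ((↑) : ℝ → ℂ)) *ᵥ z T := by
  obtain rfl : hplus = fun t => ∫ τ in (0:ℝ)..t, exp ((t - τ) • A.map Complex.ofReal) *ᵥ
      (Θ.map Complex.ofReal *ᵥ (Sᵀ.map Complex.ofReal *ᵥ f τ)) :=
    funext fun t => by
      simp only [hp, map_ofReal_mul, map_ofReal_exp_smul, mulVec_mulVec, Matrix.mul_assoc]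
  obtain rfl : hminus = fun t => ∫ τ in t..T, exp ((τ - t) • Aᵀ.map Complex.ofReal) *ᵥ
      (Sᵀ.map Complex.ofReal *ᵥ f τ) :=
    funext fun t => by simp only [hm, map_ofReal_mul, map_ofReal_exp_smul, mulVec_mulVec]
  obtain rfl : z = _ := funext hz
  have hΩ : ℧.map Complex.ofReal = -(A.map Complex.ofReal * Θ.map Complex.ofReal +
      Θ.map Complex.ofReal * Aᵀ.map Complex.ofReal) := by
    rw [h℧, Matrix.map_neg _ Complex.ofReal_neg, Matrix.map_add _ Complex.ofReal_add,
      map_ofReal_mul, map_ofReal_mul]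
  have hW : ℧⁻¹.map Complex.ofReal * ℧.map Complex.ofReal = 1 := by
    rw [← map_ofReal_mul, nonsing_inv_mul _ ((isUnit_iff_isUnit_det _).1 h℧u),
      Matrix.map_one _ Complex.ofReal_zero Complex.ofReal_one]
  have h0 : (0 : ℝ) ∈ Icc 0 T := left_mem_Icc.2 hT.le
  have hT' : T ∈ Icc 0 T := right_mem_Icc.2 hT.le
  have hSf := hf.const_mulVec (Sᵀ.map Complex.ofReal)
  have dminus (t) (ht : t ∈ Icc 0 T) := hasDerivWithinAt_integral_exp_smul_mulVec_left
    (Aᵀ.map Complex.ofReal) hSf hT' ht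
  have dz (t) (ht : t ∈ Icc 0 T) := hasDerivWithinAt_add_mulVec_of_realizable hΩ
    (hasDerivWithinAt_integral_exp_smul_mulVec (A.map Complex.ofReal)
      (hSf.const_mulVec (Θ.map Complex.ofReal)) h0 ht) (dminus t ht)
  refine ⟨_, _, dz, fun t ht => ((dz t ht).const_mulVec _).add ((dminus t ht).const_mulVec _),
    fun t ht => ?_, ?_, ?_⟩
  · simp only [Matrix.map_sub _ Complex.ofReal_sub, map_ofReal_mul]
    rw [← mulVec_mulVec (f t) (℧.map _)]
    exact second_order_eq_of_first_order hW rfl rfl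
  · simp only [Matrix.map_add _ Complex.ofReal_add,
      Matrix.map_one _ Complex.ofReal_zero Complex.ofReal_one, map_ofReal_mul]
    exact initial_condition_eq_of_first_order hW (by rw [integral_same, zero_add])
  · simp only [integral_same, mulVec_zero, add_zero]

/-- Under the physical realizability condition `AΘ + ΘAᵀ + ℧ = 0` with
`℧` invertible, the function `z(t) = h₊(t) + Θ h₋(t)` built from
`h₊(t) = ∫₀ᵗ exp((t−τ)A) Θ Sᵀ f(τ) dτ` and `h₋(t) = ∫ₜᵀ exp((τ−t)Aᵀ) Sᵀ f(τ) dτ`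
is twice differentiable on `[0,T]` and satisfies
`z̈ + (℧Aᵀ℧⁻¹ − A) ż − ℧Aᵀ℧⁻¹A z = −℧Sᵀ f` with boundary conditions
`(Iν + Θ℧⁻¹A) z(0) = Θ℧⁻¹ ż(0)` and `ż(T) = A z(T)`. -/
theorem oqho_second_order_bvp {ν n : ℕ} (T : ℝ) (hT : 0 < T)
    (A Θ : Matrix (Fin ν) (Fin ν) ℝ) (hΘ : Θᵀ = -Θ)
    (S : Matrix (Fin n) (Fin ν) ℝ)
    (℧ : Matrix (Fin ν) (Fin ν) ℝ) (h℧ : ℧ = -(A * Θ + Θ * Aᵀ)) (h℧u : IsUnit ℧)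
    (f : ℝ → Fin n → ℂ) (hf : ContinuousOn f (Set.Icc 0 T))
    (hplus hminus z : ℝ → Fin ν → ℂ)
    (hp : ∀ t : ℝ, hplus t =
      ∫ τ in (0:ℝ)..t, ((NormedSpace.exp ((t - τ) • A) * Θ * Sᵀ).map ((↑) : ℝ → ℂ)) *ᵥ f τ)
    (hm : ∀ t : ℝ, hminus t =
      ∫ τ in t..T, ((NormedSpace.exp ((τ - t) • Aᵀ) * Sᵀ).map ((↑) : ℝ → ℂ)) *ᵥ f τ)
    (hz : ∀ t : ℝ, z t = hplus t + (Θ.map ((↑) : ℝ → ℂ)) *ᵥ hminus t) :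
    ∃ z' z'' : ℝ → Fin ν → ℂ,
      (∀ t ∈ Set.Icc (0:ℝ) T, HasDerivWithinAt z (z' t) (Set.Icc 0 T) t) ∧
      (∀ t ∈ Set.Icc (0:ℝ) T, HasDerivWithinAt z' (z'' t) (Set.Icc 0 T) t) ∧
      (∀ t ∈ Set.Icc (0:ℝ) T,
        z'' t + ((℧ * Aᵀ * ℧⁻¹ - A).map ((↑) : ℝ → ℂ)) *ᵥ z' t
            - ((℧ * Aᵀ * ℧⁻¹ * A).map ((↑) : ℝ → ℂ)) *ᵥ z t
          = -(((℧ * Sᵀ).map ((↑) : ℝ → ℂ)) *ᵥ f t)) ∧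
      ((1 + Θ * ℧⁻¹ * A).map ((↑) : ℝ → ℂ)) *ᵥ z 0
          = ((Θ * ℧⁻¹).map ((↑) : ℝ → ℂ)) *ᵥ z' 0 ∧
      z' T = (A.map ((↑) : ℝ → ℂ)) *ᵥ z T :=
  oqho_second_order_bvp_general T hT A Θ S ℧ h℧ h℧u f hf hplus hminus z hp hm hz
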